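/- Let n ≥ 3 and let α ∈ A_{n+1} be a pure strongly alternative element. Then α = λ·ẽ_0 for some λ ∈ ℝ. -/

import Mathlib

noncomputable section

open scoped Quaternion

/-- The Cayley–Dickson algebra `A n = ℝ^(2^n)` as a type. -/
def CD : ℕ → Type
  | 0 => ℝ
  | n + 1 => CD n × CD n

namespace CD

instance instAddCommGroup : (n : ℕ) → AddCommGroup (CD n)
  | 0 => inferInstanceAs (AddCommGroup ℝ)
  | n + 1 =>
    letI := instAddCommGroup n
    inferInstanceAs (AddCommGroup (CD n × CD n))

instance instModule : (n : ℕ) → Module ℝ (CD n)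
  | 0 => inferInstanceAs (Module ℝ ℝ)
  | n + 1 =>
    letI := instModule n
    inferInstanceAs (Module ℝ (CD n × CD n))

/-- Conjugation in the Cayley–Dickson algebra. -/
def conj : {n : ℕ} → CD n → CD n
  | 0, x => x
  | _ + 1, x => (conj x.1, -x.2)

/-- Cayley–Dickson multiplication. -/
def mul : {n : ℕ} → CD n → CD n → CD n
  | 0, x, y => Mul.mul (α := ℝ) x y
  | _ + 1, x, y =>
    (mul x.1 y.1 - mul (conj y.2) x.2, mul y.2 x.1 + mul x.2 (conj y.1))

instance instMul (n : ℕ) : Mul (CD n) := ⟨mul⟩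

/-- The multiplicative unit `e₀`. -/
def one : {n : ℕ} → CD n
  | 0 => (1 : ℝ)
  | _ + 1 => (one, 0)

instance instOne (n : ℕ) : One (CD n) := ⟨one⟩

/-- The Euclidean inner product on `A n = ℝ^(2^n)`. -/
def inner : {n : ℕ} → CD n → CD n → ℝ
  | 0, x, y => (x * y : ℝ)
  | _ + 1, x, y => inner x.1 y.1 + inner x.2 y.2

/-- The Euclidean norm on `A n = ℝ^(2^n)`. -/
def norm {n : ℕ} (x : CD n) : ℝ := Real.sqrt (inner x x)

/-- `ã = (-a₂, a₁)`. -/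
def tilde {n : ℕ} (a : CD (n + 1)) : CD (n + 1) := (-a.2, a.1)

/-- `ẽ₀ = (0, e₀)`. -/
def etilde (n : ℕ) : CD (n + 1) := ((0 : CD n), (1 : CD n))

/-- An element is pure if its conjugate is its negative. -/
def IsPure {n : ℕ} (a : CD n) : Prop := conj a = -a

/-- An element of `A (n+1)` is doubly pure if both of its coordinates are pure. -/
def IsDoublyPure {n : ℕ} (a : CD (n + 1)) : Prop := IsPure a.1 ∧ IsPure a.2

/-- The associator `(a,b,c) = (ab)c - a(bc)`. -/
def assoc {n : ℕ} (a b c : CD n) : CD n := a * b * c - a * (b * c)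

/-- An element is alternative if `(a,a,x) = 0` for all `x`. -/
def IsAlternative {n : ℕ} (a : CD n) : Prop := ∀ x : CD n, assoc a a x = 0

/-- An element is strongly alternative if `(a,a,x) = 0` and `(a,x,x) = 0` for all `x`. -/
def IsStronglyAlternative {n : ℕ} (a : CD n) : Prop :=
  (∀ x : CD n, assoc a a x = 0) ∧ (∀ x : CD n, assoc a x x = 0)

/-- The pure (imaginary) part of an element. -/
def im {n : ℕ} (a : CD n) : CD n := (2⁻¹ : ℝ) • (a - conj a)

/-- `H a`, the span of `{e₀, ã, a, ẽ₀}`. -/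
def H {n : ℕ} (a : CD (n + 1)) : Submodule ℝ (CD (n + 1)) :=
  Submodule.span ℝ {(1 : CD (n + 1)), tilde a, a, etilde n}

/-- The orthogonal complement of `H a`. -/
def Hperp {n : ℕ} (a : CD (n + 1)) : Set (CD (n + 1)) :=
  {x | ∀ y ∈ H a, inner y x = 0}

end CD

/-! Linearizing `(α, x, x) = 0` gives `(α, x, y) + (α, y, x) = 0`. For `α = (a, b)`, `x = (c, 0)`
and `y = (0, d)` with `c, d` pure, the two halves of this identity read `(d, a, c) = 0` and
`(d, b, c) = 0`. An element `u = (u₁, u₂)` of `A_{n}`, `n ≥ 3`, associating in the middle with all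
pure elements is real: testing against `(c, 0)` and `(0, e)` makes `u₁` and `u₂` central in the
quaternion-or-larger algebra `A_{n-1}`, whose centre is `ℝ`, and then `u₂ = 0` because `A_{n-1}` is
not commutative. Hence `a` and `b` are real; `a` is also pure, so `a = 0` and `α = b ẽ₀`. -/

namespace CD

variable {n : ℕ}

@[ext] theorem ext {x y : CD (n + 1)} (h₁ : x.1 = y.1) (h₂ : x.2 = y.2) : x = y := Prod.ext h₁ h₂

@[simp] theorem fst_add (x y : CD (n + 1)) : (x + y).1 = x.1 + y.1 := rfl
@[simp] theorem snd_add (x y : CD (n + 1)) : (x + y).2 = x.2 + y.2 := rfl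
@[simp] theorem fst_sub (x y : CD (n + 1)) : (x - y).1 = x.1 - y.1 := rfl
@[simp] theorem snd_sub (x y : CD (n + 1)) : (x - y).2 = x.2 - y.2 := rfl
@[simp] theorem fst_smul (r : ℝ) (x : CD (n + 1)) : (r • x).1 = r • x.1 := rfl
@[simp] theorem snd_smul (r : ℝ) (x : CD (n + 1)) : (r • x).2 = r • x.2 := rfl
@[simp] theorem fst_zero : (0 : CD (n + 1)).1 = 0 := rfl
@[simp] theorem snd_zero : (0 : CD (n + 1)).2 = 0 := rfl
@[simp] theorem fst_one : (1 : CD (n + 1)).1 = 1 := rfl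
@[simp] theorem snd_one : (1 : CD (n + 1)).2 = 0 := rfl
@[simp] theorem fst_mul (x y : CD (n + 1)) : (x * y).1 = x.1 * y.1 - conj y.2 * x.2 := rfl
@[simp] theorem snd_mul (x y : CD (n + 1)) : (x * y).2 = y.2 * x.1 + x.2 * conj y.1 := rfl
@[simp] theorem fst_conj (x : CD (n + 1)) : (conj x).1 = conj x.1 := rfl
@[simp] theorem snd_conj (x : CD (n + 1)) : (conj x).2 = -x.2 := rfl

def mk (a b : CD n) : CD (n + 1) := (a, b)

@[simp] theorem fst_mk (a b : CD n) : (mk a b).1 = a := rfl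
@[simp] theorem snd_mk (a b : CD n) : (mk a b).2 = b := rfl
@[simp] theorem fst_etilde : (etilde n).1 = 0 := rfl
@[simp] theorem snd_etilde : (etilde n).2 = 1 := rfl

@[simp] theorem conj_add : ∀ {n : ℕ} (x y : CD n), conj (x + y) = conj x + conj y
  | 0, _, _ => rfl
  | _ + 1, x, y => ext (conj_add x.1 y.1) (neg_add x.2 y.2)

@[simp] theorem conj_neg : ∀ {n : ℕ} (x : CD n), conj (-x) = -conj x
  | 0, _ => rfl
  | _ + 1, x => ext (conj_neg x.1) rfl

@[simp] theorem conj_smul : ∀ {n : ℕ} (r : ℝ) (x : CD n), conj (r • x) = r • conj x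
  | 0, _, _ => rfl
  | _ + 1, r, x => ext (conj_smul r x.1) (smul_neg r x.2).symm

@[simp] theorem conj_conj : ∀ {n : ℕ} (x : CD n), conj (conj x) = x
  | 0, _ => rfl
  | _ + 1, x => ext (conj_conj x.1) (neg_neg x.2)

@[simp] theorem conj_zero : ∀ {n : ℕ}, conj (0 : CD n) = 0
  | 0 => rfl
  | _ + 1 => ext conj_zero neg_zero

@[simp] theorem conj_one : ∀ {n : ℕ}, conj (1 : CD n) = 1
  | 0 => rfl
  | _ + 1 => ext conj_one neg_zero

@[simp] theorem conj_sub (x y : CD n) : conj (x - y) = conj x - conj y := by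
  rw [sub_eq_add_neg, conj_add, conj_neg, sub_eq_add_neg]

theorem mul_add_and_add_mul : ∀ {n : ℕ} (x y z : CD n),
    x * (y + z) = x * y + x * z ∧ (x + y) * z = x * z + y * z
  | 0, x, y, z => ⟨mul_add (R := ℝ) x y z, add_mul (R := ℝ) x y z⟩
  | m + 1, x, y, z => by
    have ih := fun x y z : CD m => mul_add_and_add_mul x y z
    constructor <;> ext <;> simp only [fst_mul, snd_mul, fst_add, snd_add, conj_add, ih] <;> abel

theorem zero_mul_and_mul_zero (x : CD n) : 0 * x = 0 ∧ x * 0 = 0 := by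
  constructor
  · have h := (mul_add_and_add_mul (0 : CD n) 0 x).2
    rwa [add_zero, left_eq_add] at h
  · have h := (mul_add_and_add_mul x (0 : CD n) 0).1
    rwa [add_zero, left_eq_add] at h

theorem one_mul_and_mul_one : ∀ {n : ℕ} (x : CD n), 1 * x = x ∧ x * 1 = x
  | 0, x => ⟨one_mul (M := ℝ) x, mul_one (M := ℝ) x⟩
  | m + 1, x => by
    have ih := fun x : CD m => one_mul_and_mul_one x
    have h₀ := fun x : CD m => zero_mul_and_mul_zero x
    constructor <;> ext <;> simp [ih, h₀]

@[reducible] def nonAssocRing (n : ℕ) : NonAssocRing (CD n) :=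
  { instAddCommGroup n, instMul n, instOne n with
    left_distrib := fun x y z => (mul_add_and_add_mul x y z).1
    right_distrib := fun x y z => (mul_add_and_add_mul x y z).2
    zero_mul := fun x => (zero_mul_and_mul_zero x).1
    mul_zero := fun x => (zero_mul_and_mul_zero x).2
    one_mul := fun x => (one_mul_and_mul_one x).1
    mul_one := fun x => (one_mul_and_mul_one x).2 }

-- Local: as a global instance it would reroute the elaboration of `r • x` on `CD n` through it.
attribute [local instance] nonAssocRing

theorem smul_mul_and_mul_smul : ∀ {n : ℕ} (r : ℝ) (x y : CD n),
    (r • x) * y = r • (x * y) ∧ x * (r • y) = r • (x * y)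
  | 0, r, x, y => ⟨smul_mul_assoc (β := ℝ) r x y, mul_smul_comm (β := ℝ) r x y⟩
  | m + 1, r, x, y => by
    have ih := fun (r : ℝ) (x y : CD m) => smul_mul_and_mul_smul r x y
    constructor <;> ext <;> simp [ih, smul_sub]

instance (n : ℕ) : IsScalarTower ℝ (CD n) (CD n) :=
  ⟨fun r x y => by rw [smul_eq_mul, smul_eq_mul, (smul_mul_and_mul_smul r x y).1]⟩

instance (n : ℕ) : SMulCommClass ℝ (CD n) (CD n) :=
  ⟨fun r x y => by rw [smul_eq_mul, smul_eq_mul, (smul_mul_and_mul_smul r x y).2]⟩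

instance (n : ℕ) : IsAddTorsionFree (CD n) := .of_isTorsionFree ℝ (CD n)

@[simp] theorem conj_mul : ∀ {n : ℕ} (x y : CD n), conj (x * y) = conj y * conj x
  | 0, x, y => mul_comm (G := ℝ) x y
  | m + 1, x, y => by
    have ih := fun x y : CD m => conj_mul x y
    ext <;> simp [ih]

theorem assoc_add_assoc_swap_eq_zero {a : CD n} (h : ∀ x, assoc a x x = 0) (x y : CD n) :
    assoc a x y + assoc a y x = 0 :=
  calc assoc a x y + assoc a y x = assoc a (x + y) (x + y) - assoc a x x - assoc a y y := by
        simp only [assoc, mul_add, add_mul]; abel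
    _ = 0 := by rw [h, h, h, sub_zero, sub_zero]

theorem exists_eq_smul_one_of_conj_eq : ∀ {n : ℕ} {x : CD n}, conj x = x → ∃ r : ℝ, x = r • 1
  | 0, x, _ => ⟨x, (mul_one (M := ℝ) x).symm⟩
  | _ + 1, x, h => by
    obtain ⟨r, hr⟩ := exists_eq_smul_one_of_conj_eq (congrArg Prod.fst h)
    have h₂ : x.2 = 0 := neg_eq_self.mp (congrArg Prod.snd h)
    exact ⟨r, ext (by simpa using hr) (by simpa using h₂)⟩

protected theorem one_ne_zero : ∀ {n : ℕ}, (1 : CD n) ≠ 0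
  | 0 => one_ne_zero (α := ℝ)
  | _ + 1 => fun h => CD.one_ne_zero (CD.ext_iff.mp h).1

instance : NeZero (1 : CD n) := ⟨CD.one_ne_zero⟩

@[simp] theorem conj_etilde : conj (etilde n) = -etilde n := ext (conj_zero.trans neg_zero.symm) rfl

theorem isPure_etilde : IsPure (etilde n) := conj_etilde

theorem etilde_ne_zero : etilde n ≠ 0 := fun h => one_ne_zero (CD.ext_iff.mp h).2

theorem mul_etilde (x : CD (n + 1)) : x * etilde n = tilde x := by
  ext <;> simp [tilde]

theorem mul_etilde_eq_zero_iff {x : CD (n + 1)} : x * etilde n = 0 ↔ x = 0 := by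
  rw [mul_etilde, CD.ext_iff, CD.ext_iff]
  simp [tilde, and_comm]

theorem isPure_mk_zero {c : CD n} (hc : IsPure c) : IsPure (mk c 0) := ext hc rfl

theorem isPure_zero_mk (e : CD n) : IsPure (mk 0 e) :=
  ext (conj_zero.trans neg_zero.symm) rfl

theorem exists_eq_smul_one_of_commute {w : CD (n + 2)} (h₁ : Commute w (etilde (n + 1)))
    (h₂ : Commute w (mk (etilde n) 0)) : ∃ r : ℝ, w = r • 1 := by
  obtain ⟨r, hr⟩ : ∃ r : ℝ, w.1 = r • 1 :=
    exists_eq_smul_one_of_conj_eq (by simpa using (CD.ext_iff.mp h₁.eq).2.symm)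
  have hw₂ : w.2 * etilde n = 0 := by
    have := (CD.ext_iff.mp h₂.eq).2
    simp only [snd_mul, fst_mk, snd_mk, conj_etilde, mul_neg, zero_mul, zero_add, add_zero] at this
    exact neg_eq_self.mp this
  exact ⟨r, ext (by simp [hr]) (by simpa using mul_etilde_eq_zero_iff.mp hw₂)⟩

theorem not_commute_etilde : ¬Commute (etilde (n + 1)) (mk (etilde n) 0) := fun h => by
  have := (CD.ext_iff.mp h.eq).2
  simp only [snd_mul, snd_mk, fst_etilde, mul_zero, snd_etilde, fst_mk, conj_etilde, mul_neg,
    one_mul, zero_add, conj_zero, add_zero] at this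
  exact etilde_ne_zero (neg_eq_self.mp this)

theorem assoc_mk_zero_zero_mk (c e : CD n) (u : CD (n + 1)) :
    assoc (mk c 0) u (mk 0 e) =
      mk (c * (conj e * u.2) - conj e * (u.2 * c)) (e * (c * u.1) - e * u.1 * c) := by
  ext
  · simp [assoc]; abel
  · simp [assoc]

theorem IsPure.eq_zero_of_eq_smul_one {x : CD n} (hx : IsPure x) {r : ℝ} (h : x = r • 1) :
    x = 0 := by
  have : r • (1 : CD n) = -(r • 1) := by rw [← h, ← hx, h, conj_smul, conj_one]
  rw [h, self_eq_neg.mp this]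

theorem exists_eq_smul_one_of_forall_assoc_eq_zero {u : CD (n + 3)}
    (h : ∀ x y : CD (n + 3), IsPure x → IsPure y → assoc x u y = 0) : ∃ r : ℝ, u = r • 1 := by
  have key : ∀ c e : CD (n + 2), IsPure c →
      c * (conj e * u.2) = conj e * (u.2 * c) ∧ e * (c * u.1) = e * u.1 * c := by
    intro c e hc
    have := (assoc_mk_zero_zero_mk c e u).symm.trans (h _ _ (isPure_mk_zero hc) (isPure_zero_mk e))
    simpa [sub_eq_zero] using CD.ext_iff.mp this
  have hcomm : ∀ c : CD (n + 2), IsPure c → Commute u.1 c ∧ Commute u.2 c := by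
    intro c hc
    obtain ⟨h₂, h₁⟩ := key c 1 hc
    simp only [conj_one, one_mul] at h₁ h₂
    exact ⟨h₁.symm, h₂.symm⟩
  have hi := hcomm _ isPure_etilde
  have hj := hcomm _ (isPure_mk_zero isPure_etilde)
  obtain ⟨r, hr⟩ := exists_eq_smul_one_of_commute hi.1 hj.1
  obtain ⟨s, hs⟩ := exists_eq_smul_one_of_commute hi.2 hj.2
  have hs₀ : s = 0 := by
    have := (key (mk (etilde n) 0) (etilde (n + 1)) (isPure_mk_zero isPure_etilde)).1
    simp only [hs, conj_etilde, neg_mul, mul_neg, smul_mul_assoc, mul_smul_comm, one_mul,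
      mul_one] at this
    by_contra hs₀
    exact not_commute_etilde (neg_inj.mp (smul_right_injective _ hs₀ this)).symm
  exact ⟨r, ext (by simp [hr]) (by simp [hs, hs₀])⟩

theorem assoc_mk_zero_zero_mk_add_swap {c d : CD n} (hc : IsPure c) (hd : IsPure d)
    (x : CD (n + 1)) :
    assoc x (mk c 0) (mk 0 d) + assoc x (mk 0 d) (mk c 0) = mk (assoc d x.2 c) (-assoc d x.1 c) := by
  unfold IsPure at hc hd
  ext <;> simp [assoc, hc, hd] <;> abel

end CD

/-- For `n ≥ 3`, a pure strongly alternative element of `A (n+1)`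
is a real multiple of `ẽ₀`. -/
theorem pure_stronglyAlternative_eq_smul_etilde (n : ℕ) (hn : 3 ≤ n) (α : CD (n + 1))
    (hp : CD.IsPure α) (hsa : CD.IsStronglyAlternative α) :
    ∃ l : ℝ, α = l • CD.etilde n := by
  obtain ⟨m, rfl⟩ : ∃ m, n = m + 3 := ⟨n - 3, by omega⟩
  have hmid : ∀ d c : CD (m + 3), CD.IsPure d → CD.IsPure c →
      CD.assoc d α.1 c = 0 ∧ CD.assoc d α.2 c = 0 := by
    intro d c hd hc
    have := CD.assoc_mk_zero_zero_mk_add_swap hc hd α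
    rw [CD.assoc_add_assoc_swap_eq_zero hsa.2] at this
    obtain ⟨h₂, h₁⟩ := CD.ext_iff.mp this
    exact ⟨neg_eq_zero.mp h₁.symm, h₂.symm⟩
  obtain ⟨r, hr⟩ := CD.exists_eq_smul_one_of_forall_assoc_eq_zero fun d c hd hc => (hmid d c hd hc).1
  obtain ⟨l, hl⟩ := CD.exists_eq_smul_one_of_forall_assoc_eq_zero fun d c hd hc => (hmid d c hd hc).2
  have hα₁ : α.1 = 0 := CD.IsPure.eq_zero_of_eq_smul_one (CD.ext_iff.mp hp).1 hr
  exact ⟨l, CD.ext (by simp [hα₁]) (by simp [hl])⟩
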